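/- Let H be a k-uniform hypergraph admitting a proper 2-coloring of its vertices (no edge monochromatic), and let G be the bipartite vertex-edge incidence graph of H, with parts V(H) and E(H). Then G has a color-blind distinguishing 2-edge-coloring, i.e., dal(G) ≤ 2. -/

import Mathlib

open Finset

/-- The color-blind partition of `v`: the multiset of (nonzero) counts of incident
edges of each color, i.e. the partition of `deg v` with trailing zeroes removed. -/
def cbp {V : Type*} [Fintype V] [DecidableEq V] (G : SimpleGraph V) [DecidableRel G.Adj]
    {k : ℕ} (c : Sym2 V → Fin k) (v : V) : Multiset ℕ :=
  (((Finset.univ : Finset (Fin k)).val.map fun i =>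
    ((G.neighborFinset v).filter fun w => c s(v, w) = i).card).filter fun m => m ≠ 0)

/-- `c` is a color-blind distinguishing edge-coloring of `G`. -/
def IsCBD {V : Type*} [Fintype V] [DecidableEq V] (G : SimpleGraph V) [DecidableRel G.Adj]
    {k : ℕ} (c : Sym2 V → Fin k) : Prop :=
  ∀ u v : V, G.Adj u v → cbp G c u ≠ cbp G c v

/-- The vertex-edge incidence graph of a hypergraph with vertex set U and edge set E. -/
def incidenceGraph {U : Type*} [DecidableEq U] (E : Finset (Finset U)) :
    SimpleGraph (U ⊕ {e // e ∈ E}) where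
  Adj a b := match a, b with
    | Sum.inl v, Sum.inr e => v ∈ e.1
    | Sum.inr e, Sum.inl v => v ∈ e.1
    | _, _ => False
  symm := ⟨by rintro (v | e) (w | f) h <;> exact h⟩
  loopless := ⟨by rintro (v | e) h <;> exact h⟩

instance {U : Type*} [DecidableEq U] (E : Finset (Finset U)) :
    DecidableRel (incidenceGraph E).Adj := fun a b =>
  match a, b with
  | Sum.inl v, Sum.inr e => inferInstanceAs (Decidable (v ∈ e.1))
  | Sum.inr e, Sum.inl v => inferInstanceAs (Decidable (v ∈ e.1))
  | Sum.inl _, Sum.inl _ => inferInstanceAs (Decidable False)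
  | Sum.inr _, Sum.inr _ => inferInstanceAs (Decidable False)

/-!
Colour each incidence `v ∈ e` of the incidence graph with the colour of `v` in a proper
colouring of the hypergraph. Then every vertex of the hypergraph sees a single colour, while every
hyperedge, not being monochromatic, sees at least two; so the number of parts of the colour-blind
partitions already separates the two ends of every edge.
-/

section

variable {V : Type*} [Fintype V] [DecidableEq V] (G : SimpleGraph V) [DecidableRel G.Adj]

theorem card_cbp {k : ℕ} (c : Sym2 V → Fin k) (v : V) :
    (cbp G c v).card = ((G.neighborFinset v).image fun w => c s(v, w)).card := by
  rw [cbp, Multiset.filter_map, Multiset.card_map, ← Finset.filter_val, Finset.card_val]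
  congr 1
  ext i
  simp only [Finset.mem_filter, Finset.mem_univ, true_and, Function.comp_apply, ne_eq,
    Finset.card_eq_zero, ← Finset.nonempty_iff_ne_empty, Finset.filter_nonempty_iff,
    Finset.mem_image]

end

section

variable {U : Type*} [DecidableEq U] (E : Finset (Finset U))

@[simp]
theorem incidenceGraph_adj_inl_inr (v : U) (e : {e // e ∈ E}) :
    (incidenceGraph E).Adj (Sum.inl v) (Sum.inr e) ↔ v ∈ e.1 := Iff.rfl

@[simp]
theorem incidenceGraph_not_adj_inr_inr (e f : {e // e ∈ E}) :
    ¬(incidenceGraph E).Adj (Sum.inr e) (Sum.inr f) := id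

theorem incidenceGraph_neighborFinset_inr [Fintype U] (e : {e // e ∈ E}) :
    (incidenceGraph E).neighborFinset (Sum.inr e) = e.1.map Function.Embedding.inl := by
  ext (w | f) <;> simp [SimpleGraph.adj_comm]

/-- The value `0` on pairs that are not edges of the incidence graph is never read. -/
def incidenceColoring {k : ℕ} [NeZero k] (f : U → Fin k) :
    Sym2 (U ⊕ {e // e ∈ E}) → Fin k :=
  Sym2.lift ⟨fun a b => match a, b with
    | Sum.inl v, Sum.inr _ => f v
    | Sum.inr _, Sum.inl v => f v
    | _, _ => 0,
    by rintro (v | e) (w | g) <;> rfl⟩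

variable [Fintype U] {k : ℕ} [NeZero k] (f : U → Fin k)

theorem card_cbp_incidenceColoring_inl_le_one (v : U) :
    (cbp (incidenceGraph E) (incidenceColoring E f) (Sum.inl v)).card ≤ 1 := by
  rw [card_cbp, Finset.card_le_one]
  rintro _ ha _ hb
  simp only [Finset.mem_image, SimpleGraph.mem_neighborFinset] at ha hb
  obtain ⟨(_ | _), hadj, rfl⟩ := ha
  · exact hadj.elim
  obtain ⟨(_ | _), hadj', rfl⟩ := hb
  · exact hadj'.elim
  rfl

theorem card_cbp_incidenceColoring_inr (e : {e // e ∈ E}) :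
    (cbp (incidenceGraph E) (incidenceColoring E f) (Sum.inr e)).card = (e.1.image f).card := by
  rw [card_cbp, incidenceGraph_neighborFinset_inr, Finset.map_eq_image, Finset.image_image]
  rfl

theorem isCBD_incidenceColoring (hf : ∀ e ∈ E, ∃ v ∈ e, ∃ w ∈ e, f v ≠ f w) :
    IsCBD (incidenceGraph E) (incidenceColoring E f) := by
  have card_lt : ∀ v e, (cbp (incidenceGraph E) (incidenceColoring E f) (Sum.inl v)).card <
      (cbp (incidenceGraph E) (incidenceColoring E f) (Sum.inr e)).card := by
    intro v e
    obtain ⟨a, ha, b, hb, hab⟩ := hf e.1 e.2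
    rw [card_cbp_incidenceColoring_inr]
    exact (card_cbp_incidenceColoring_inl_le_one E f v).trans_lt <|
      Finset.one_lt_card.2
        ⟨f a, Finset.mem_image_of_mem f ha, f b, Finset.mem_image_of_mem f hb, hab⟩
  rintro (v | e) (w | g) hadj h
  · exact hadj.elim
  · exact (card_lt v g).ne (congrArg Multiset.card h)
  · exact (card_lt w e).ne' (congrArg Multiset.card h)
  · exact hadj.elim

end

theorem incidence_graph_of_two_colorable_dal_le_two
    {U : Type*} [Fintype U] [DecidableEq U] (E : Finset (Finset U))
    (h2col : ∃ f : U → Bool, ∀ e ∈ E, (∃ v ∈ e, f v = true) ∧ (∃ v ∈ e, f v = false)) :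
    ∃ c : Sym2 (U ⊕ {e // e ∈ E}) → Fin 2, IsCBD (incidenceGraph E) c := by
  obtain ⟨f, hf⟩ := h2col
  refine ⟨incidenceColoring E fun v => if f v then 1 else 0, isCBD_incidenceColoring E _ ?_⟩
  intro e he
  obtain ⟨⟨v, hv, hfv⟩, ⟨w, hw, hfw⟩⟩ := hf e he
  exact ⟨v, hv, w, hw, by simp [hfv, hfw]⟩
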